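/- Jacobson–Morozov in matrices: for every nonzero nilpotent complex n×n matrix X there exist matrices H, Y in gl_n(C) with [H,X] = 2X, [H,Y] = −2Y, and [X,Y] = H, i.e., (H, X, Y) is an sl2-triple. -/

import Mathlib

/-!
Make `K[X]` act on `V` through the nilpotent endomorphism `f`. By the structure theorem for
finitely generated torsion modules over the PID `K[X]`, `V` is a direct sum of cyclic modules
`K[X] ⧸ (p ^ e)` with `p` irreducible; since `X ^ n` kills `V`, every `p` is associate to `X`, so
`f` is a direct sum of multiplications by `X` on Jordan blocks `K[X] ⧸ (X ^ k)`. On such a block,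
in the basis `1, X, …, X ^ (k - 1)`, put `h (X ^ t) = (2t + 1 - k) X ^ t` and
`y (X ^ (t + 1)) = (t + 1)(k - t - 1) X ^ t`, `y 1 = 0`: this is the standard `k`-dimensional
representation of `sl₂`. Direct sums and conjugation preserve the `sl₂` relations.
-/

open Polynomial DirectSum

/-- Unlike Mathlib's `IsSl2Triple`, this does not require `h ≠ 0`, which fails on blocks of
size one. -/
structure SatisfiesSl2Relations {A : Type*} [Ring A] (h e f : A) : Prop where
  lie_h_e : h * e - e * h = 2 • e
  lie_h_f : h * f - f * h = (-2 : ℤ) • f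
  lie_e_f : e * f - f * e = h

namespace SatisfiesSl2Relations

theorem map {A B F : Type*} [Ring A] [Ring B] [FunLike F A B] [RingHomClass F A B] {h e f : A}
    (t : SatisfiesSl2Relations h e f) (φ : F) : SatisfiesSl2Relations (φ h) (φ e) (φ f) where
  lie_h_e := by simp only [← map_mul, ← map_sub, t.lie_h_e, map_nsmul]
  lie_h_f := by simp only [← map_mul, ← map_sub, t.lie_h_f, map_zsmul]
  lie_e_f := by simp only [← map_mul, ← map_sub, t.lie_e_f]

theorem lmap {R ι : Type*} [CommRing R] {M : ι → Type*} [∀ i, AddCommGroup (M i)]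
    [∀ i, Module R (M i)] {h e f : ∀ i, Module.End R (M i)}
    (t : ∀ i, SatisfiesSl2Relations (h i) (e i) (f i)) :
    SatisfiesSl2Relations (DirectSum.lmap h) (DirectSum.lmap e) (DirectSum.lmap f) := by
  have neg_apply (y : ⨁ i, M i) (i : ι) : (-y) i = -y i := rfl
  constructor <;> refine LinearMap.ext fun x ↦ DirectSum.ext fun i ↦ ?_
  · simpa [two_nsmul] using LinearMap.congr_fun (t i).lie_h_e (x i)
  · simpa [two_nsmul, neg_apply] using LinearMap.congr_fun (t i).lie_h_f (x i)
  · simpa using LinearMap.congr_fun (t i).lie_e_f (x i)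

theorem of_span_range_eq_top {R M : Type*} [CommRing R] [AddCommGroup M] [Module R M]
    {h e f : Module.End R M} (k : R) {μ : ℕ → M} (hμ : Submodule.span R (Set.range μ) = ⊤)
    (he : ∀ t, e (μ t) = μ (t + 1)) (hh : ∀ t : ℕ, h (μ t) = (2 * t + 1 - k) • μ t)
    (hf₀ : f (μ 0) = 0) (hf : ∀ t : ℕ, f (μ (t + 1)) = ((t + 1) * (k - (t + 1))) • μ t) :
    SatisfiesSl2Relations h e f := by
  constructor <;> refine LinearMap.ext_on_range hμ fun t ↦ ?_
  · simp only [LinearMap.sub_apply, Module.End.mul_apply, LinearMap.smul_apply, he, hh, map_smul]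
    push_cast
    module
  · rcases t with _ | t
    · simp [hf₀, hh]
    · simp only [LinearMap.sub_apply, Module.End.mul_apply, LinearMap.smul_apply, hf, hh,
        map_smul]
      push_cast
      module
  · rcases t with _ | t
    · simp [hf₀, hh, he, hf 0]
      module
    · simp only [LinearMap.sub_apply, Module.End.mul_apply, hf, hh, he, map_smul]
      push_cast
      module

end SatisfiesSl2Relations

section smulX

variable (R : Type*) [CommRing R]

noncomputable def smulX (M : Type*) [AddCommMonoid M] [Module R[X] M] [Module R M]
    [IsScalarTower R R[X] M] : Module.End R M :=
  (LinearMap.lsmul R[X] M X).restrictScalars R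

variable {R}

@[simp]
theorem smulX_apply {M : Type*} [AddCommMonoid M] [Module R[X] M] [Module R M]
    [IsScalarTower R R[X] M] (m : M) : smulX R M m = (X : R[X]) • m :=
  rfl

theorem conjRingEquiv_smulX {M N : Type*} [AddCommMonoid M] [Module R[X] M] [Module R M]
    [IsScalarTower R R[X] M] [AddCommMonoid N] [Module R[X] N] [Module R N]
    [IsScalarTower R R[X] N] (ψ : M ≃ₗ[R[X]] N) :
    (ψ.restrictScalars R).conjRingEquiv (smulX R M) = smulX R N := by
  ext n
  simp

theorem lmap_smulX {ι : Type*} (M : ι → Type*) [∀ i, AddCommMonoid (M i)]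
    [∀ i, Module R[X] (M i)] [∀ i, Module R (M i)] [∀ i, IsScalarTower R R[X] (M i)] :
    DirectSum.lmap (fun i ↦ smulX R (M i)) = smulX R (⨁ i, M i) := by
  ext x i
  simp [DirectSum.smul_apply]

theorem conjRingEquiv_aeval'_of {M : Type*} [AddCommGroup M] [Module R M] (f : Module.End R M) :
    (Module.AEval'.of f).conjRingEquiv f = smulX R (Module.AEval' f) := by
  ext m
  rw [LinearEquiv.conjRingEquiv_apply_apply, smulX_apply, ← Module.AEval'.of_symm_X_smul,
    LinearEquiv.apply_symm_apply]

end smulX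

section JordanBlock

variable {R : Type*} [CommRing R] [Nontrivial R]

theorem exists_basis_quotient_X_pow (k : ℕ) :
    ∃ b : Module.Basis (Fin k) R (R[X] ⧸ R[X] ∙ (X ^ k : R[X])),
      ∀ j, b j = Submodule.Quotient.mk (X ^ (j : ℕ)) := by
  let b := AdjoinRoot.powerBasis' (monic_X_pow (R := R) k)
  have hdim : b.dim = k := natDegree_X_pow k
  refine ⟨b.basis.reindex (finCongr hdim), fun j ↦ ?_⟩
  show b.basis.reindex (finCongr hdim) j = AdjoinRoot.mk (X ^ k) (X ^ (j : ℕ))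
  rw [Module.Basis.reindex_apply, b.basis_eq_pow, map_pow, AdjoinRoot.mk_X]
  rfl

theorem exists_satisfiesSl2Relations_smulX_quotient_X_pow (k : ℕ) :
    ∃ h f : Module.End R (R[X] ⧸ R[X] ∙ (X ^ k : R[X])),
      SatisfiesSl2Relations h (smulX R _) f := by
  set μ : ℕ → R[X] ⧸ R[X] ∙ (X ^ k : R[X]) := fun t ↦ Submodule.Quotient.mk (X ^ t) with hμ
  have hμ_eq_zero (t : ℕ) (ht : k ≤ t) : μ t = 0 :=
    (Submodule.Quotient.mk_eq_zero _).mpr <| Submodule.mem_span_singleton.mpr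
      ⟨X ^ (t - k), by rw [smul_eq_mul, ← pow_add, Nat.sub_add_cancel ht]⟩
  obtain ⟨b, hb⟩ := exists_basis_quotient_X_pow (R := R) k
  have constr_apply (v : Fin k → R[X] ⧸ R[X] ∙ (X ^ k : R[X])) (t : ℕ) (ht : t < k) :
      b.constr R v (μ t) = v ⟨t, ht⟩ := by
    rw [show μ t = b ⟨t, ht⟩ from (hb ⟨t, ht⟩).symm, b.constr_basis]
  refine ⟨b.constr R fun j ↦ (2 * (j : ℕ) + 1 - k : R) • μ j,
    b.constr R fun j ↦ ((j : ℕ) * (k - (j : ℕ)) : R) • μ (j - 1),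
    .of_span_range_eq_top (k : R) (μ := μ) ?_ (fun t ↦ ?_) (fun t ↦ ?_) ?_ (fun t ↦ ?_)⟩
  · refine eq_top_iff.mpr (b.span_eq.symm.trans_le (Submodule.span_mono ?_))
    rintro _ ⟨j, rfl⟩
    exact ⟨j, (hb j).symm⟩
  · simp only [smulX_apply, hμ, ← Submodule.Quotient.mk_smul, smul_eq_mul, pow_succ']
  · rcases lt_or_ge t k with ht | ht
    · exact constr_apply _ t ht
    · simp [hμ_eq_zero t ht]
  · rcases Nat.eq_zero_or_pos k with hk | hk
    · simp [hμ_eq_zero 0 hk.le]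
    · simp [constr_apply _ 0 hk]
  · rcases lt_or_ge (t + 1) k with ht | ht
    · simp [constr_apply _ _ ht]
    · rw [hμ_eq_zero _ ht, map_zero]
      rcases ht.eq_or_lt with rfl | ht
      · simp
      · simp [hμ_eq_zero t (by omega)]

end JordanBlock

theorem dvd_of_mem_annihilator_directSum {R ι M : Type*} [CommRing R] [AddCommGroup M]
    [Module R M] {q : ι → R} (g : M ≃ₗ[R] ⨁ i, R ⧸ R ∙ q i) {a : R}
    (ha : a ∈ Module.annihilator R M) (i : ι) : q i ∣ a := by
  classical
  have := (lof R ι _ i).annihilator_le_of_injective (of_injective i) (g.annihilator_eq ▸ ha)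
  simpa [Ideal.annihilator_quotient, Ideal.mem_span_singleton] using this

theorem associated_pow_of_pow_dvd_pow {R : Type*} [CommMonoidWithZero R] [DecompositionMonoid R]
    {p q : R} (hp : Irreducible p) (hq : Irreducible q) {e n : ℕ} (h : p ^ e ∣ q ^ n) :
    Associated (p ^ e) (q ^ e) := by
  rcases e with _ | e
  · simp
  have hpq : p ∣ q := hp.prime.dvd_of_dvd_pow ((dvd_pow_self p e.succ_ne_zero).trans h)
  exact (hp.associated_of_dvd hq hpq).pow_pow

theorem exists_satisfiesSl2Relations_of_isNilpotent {K V : Type*} [Field K] [AddCommGroup V]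
    [Module K V] [FiniteDimensional K V] {f : Module.End K V} (hf : IsNilpotent f) :
    ∃ h y : Module.End K V, SatisfiesSl2Relations h f y := by
  obtain ⟨n, hn⟩ := hf
  have hXn : (X ^ n : K[X]) ∈ Module.annihilator K[X] (Module.AEval' f) :=
    Module.mem_annihilator.mpr fun m ↦ by
      rw [← (Module.AEval'.of f).apply_symm_apply m, Module.AEval'.X_pow_smul_of, hn, zero_smul,
        map_zero]
  obtain ⟨ι, _, p, hp, e, ⟨g⟩⟩ := Module.equiv_directSum_of_isTorsion
    (Module.AEval.isTorsion_of_finiteDimensional K V f)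
  have hspan (i : ι) : K[X] ∙ p i ^ e i = K[X] ∙ X ^ e i :=
    Ideal.span_singleton_eq_span_singleton.mpr <|
      associated_pow_of_pow_dvd_pow (hp i) irreducible_X (dvd_of_mem_annihilator_directSum g hXn i)
  let φ : Module.AEval' f ≃ₗ[K[X]] ⨁ i, K[X] ⧸ K[X] ∙ (X ^ e i : K[X]) :=
    g.trans (DirectSum.congrLinearEquiv fun i ↦ Submodule.quotEquivOfEq _ _ (hspan i))
  choose h y t using fun i ↦ exists_satisfiesSl2Relations_smulX_quotient_X_pow (R := K) (e i)
  have := ((SatisfiesSl2Relations.lmap t).map (φ.symm.restrictScalars K).conjRingEquiv).map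
    (Module.AEval'.of f).conjRingEquiv.symm
  rw [lmap_smulX, conjRingEquiv_smulX, ← conjRingEquiv_aeval'_of, RingEquiv.symm_apply_apply]
    at this
  exact ⟨_, _, this⟩

theorem stmt9_general (n : ℕ) (X : Matrix (Fin n) (Fin n) ℂ)
    (hX : IsNilpotent X) :
    ∃ H Y : Matrix (Fin n) (Fin n) ℂ,
      H * X - X * H = 2 • X ∧
      H * Y - Y * H = (-2 : ℤ) • Y ∧
      X * Y - Y * X = H := by
  let E := Matrix.toLinAlgEquiv' (R := ℂ) (n := Fin n)
  obtain ⟨H, Y, t⟩ := exists_satisfiesSl2Relations_of_isNilpotent (hX.map E)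
  have t' := t.map E.symm
  rw [AlgEquiv.symm_apply_apply] at t'
  exact ⟨_, _, t'.lie_h_e, t'.lie_h_f, t'.lie_e_f⟩

/-- Jacobson–Morozov for matrices: every nonzero nilpotent complex
`n × n` matrix `X` embeds in an `sl₂`-triple `(H, X, Y)` in `gl_n(ℂ)`:
`[H,X] = 2X`, `[H,Y] = -2Y`, `[X,Y] = H`, where `[A,B] = AB - BA`. -/
theorem stmt9 (n : ℕ) (X : Matrix (Fin n) (Fin n) ℂ)
    (hX : IsNilpotent X) (hX0 : X ≠ 0) :
    ∃ H Y : Matrix (Fin n) (Fin n) ℂ,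
      H * X - X * H = 2 • X ∧
      H * Y - Y * H = (-2 : ℤ) • Y ∧
      X * Y - Y * X = H :=
  stmt9_general n X hX
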